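/- arXiv:1310.2900 — 3 statements merged into one kernel-verified Lean document; each statement's English description precedes it below -/
import Mathlib

section
/- For every Hermitian a ∈ M_n(ℂ), the trace τ(exp(a)·Δ(a)) is real and satisfies τ(exp(a)·Δ(a)) ≥ 0, with equality if and only if a is a scalar multiple of the identity matrix. -/
open Matrix
open scoped ComplexOrder

/-- The derivation `δ₁(a) = ya − ay`. -/
noncomputable def delta1 {n : ℕ} (y a : Matrix (Fin n) (Fin n) ℂ) : Matrix (Fin n) (Fin n) ℂ :=
  y * a - a * y

/-- The derivation `δ₂(a) = ax − xa`. -/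
noncomputable def delta2 {n : ℕ} (x a : Matrix (Fin n) (Fin n) ℂ) : Matrix (Fin n) (Fin n) ℂ :=
  a * x - x * a

/-- The Laplacian `Δ = δ₁∘δ₁ + δ₂∘δ₂`. -/
noncomputable def lap {n : ℕ} (x y a : Matrix (Fin n) (Fin n) ℂ) : Matrix (Fin n) (Fin n) ℂ :=
  delta1 y (delta1 y a) + delta2 x (delta2 x a)

/-- The logarithm of a positive definite (in particular Hermitian) matrix, via the
functional calculus: unitarily diagonalize and take the real logarithm of the eigenvalues. -/
noncomputable def matLog {n : ℕ} (a : Matrix (Fin n) (Fin n) ℂ) : Matrix (Fin n) (Fin n) ℂ :=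
  if h : a.IsHermitian then
    (h.eigenvectorUnitary : Matrix (Fin n) (Fin n) ℂ) *
      Matrix.diagonal (fun i => (Real.log (h.eigenvalues i) : ℂ)) *
      (star (h.eigenvectorUnitary : Matrix (Fin n) (Fin n) ℂ))
  else 0

/-- The generating condition: the only matrices commuting with both `u = exp((2πi/n)x)`
and `v = exp((2πi/n)y)` are the scalar multiples of the identity matrix. -/
def GenCond {n : ℕ} (x y : Matrix (Fin n) (Fin n) ℂ) : Prop :=
  ∀ a : Matrix (Fin n) (Fin n) ℂ,
    a * NormedSpace.exp ((((2 * Real.pi : ℝ) : ℂ) * Complex.I / (n : ℂ)) • x)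
      = NormedSpace.exp ((((2 * Real.pi : ℝ) : ℂ) * Complex.I / (n : ℂ)) • x) * a →
    a * NormedSpace.exp ((((2 * Real.pi : ℝ) : ℂ) * Complex.I / (n : ℂ)) • y)
      = NormedSpace.exp ((((2 * Real.pi : ℝ) : ℂ) * Complex.I / (n : ℂ)) • y) * a →
    ∃ z : ℂ, a = z • (1 : Matrix (Fin n) (Fin n) ℂ)

/-!
Diagonalize `a = U diag(d) U*` and put `h' = U* h U`. The trace identity
`τ(e^a [h, [h, a]]) = τ([e^a, h] [h, a]) = ∑ i j, (e^{d i} - e^{d j}) (d i - d j) |h' i j|²`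
and the monotonicity of `exp` make every term nonnegative, and the sum vanishes only when
`h' i j = 0` whenever `d i ≠ d j`, i.e. when `a` commutes with `h`. Since
`Δ a = [y, [y, a]] + [x, [x, a]]`, the trace `τ(e^a Δ a)` vanishes only if `a` commutes with
`x` and `y`, hence with `u` and `v`, and the generating condition makes `a` scalar.
-/

section

variable {α : Type*} [Ring α] [LinearOrder α] [IsStrictOrderedRing α] {f : α → α}

theorem Monotone.sub_mul_sub_nonneg (hf : Monotone f) (s t : α) :
    0 ≤ (f s - f t) * (s - t) := by
  rcases le_total s t with h | h
  · exact mul_nonneg_of_nonpos_of_nonpos (sub_nonpos.mpr (hf h)) (sub_nonpos.mpr h)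
  · exact mul_nonneg (sub_nonneg.mpr (hf h)) (sub_nonneg.mpr h)

theorem StrictMono.sub_mul_sub_pos (hf : StrictMono f) {s t : α} (h : s ≠ t) :
    0 < (f s - f t) * (s - t) := by
  rcases h.lt_or_gt with h | h
  · exact mul_pos_of_neg_of_neg (sub_neg.mpr (hf h)) (sub_neg.mpr h)
  · exact mul_pos (sub_pos.mpr (hf h)) (sub_pos.mpr h)

end

namespace Matrix

variable {ι R : Type*}

theorem IsHermitian.apply_mul_apply_eq_normSq {m : Matrix ι ι ℂ} (hm : m.IsHermitian) (i j : ι) :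
    m i j * m j i = Complex.normSq (m i j) := by
  rw [← hm.apply j i, Complex.star_def, Complex.mul_conj]

variable [Fintype ι]

theorem trace_mul_lie [CommRing R] (e m b : Matrix ι ι R) :
    (e * ⁅m, b⁆).trace = (⁅e, m⁆ * b).trace := by
  simp only [Ring.lie_def, Matrix.mul_sub, Matrix.sub_mul, trace_sub, ← Matrix.mul_assoc,
    trace_mul_cycle e b m]

theorem sum_sub_mul_sub_mul_normSq_nonneg {f : ℝ → ℝ} (hf : Monotone f) (d : ι → ℝ)
    (m : Matrix ι ι ℂ) :
    0 ≤ ∑ i, ∑ j, (f (d i) - f (d j)) * (d i - d j) * Complex.normSq (m i j) :=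
  Finset.sum_nonneg fun _ _ => Finset.sum_nonneg fun _ _ =>
    mul_nonneg (hf.sub_mul_sub_nonneg _ _) (Complex.normSq_nonneg _)

theorem apply_eq_zero_of_sum_sub_mul_sub_mul_normSq_eq_zero {f : ℝ → ℝ} (hf : StrictMono f)
    {d : ι → ℝ} {m : Matrix ι ι ℂ}
    (hS : ∑ i, ∑ j, (f (d i) - f (d j)) * (d i - d j) * Complex.normSq (m i j) = 0)
    {i j : ι} (hij : d i ≠ d j) : m i j = 0 := by
  have hterm : ∀ i j, 0 ≤ (f (d i) - f (d j)) * (d i - d j) * Complex.normSq (m i j) :=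
    fun _ _ => mul_nonneg (hf.monotone.sub_mul_sub_nonneg _ _) (Complex.normSq_nonneg _)
  rw [Finset.sum_eq_zero_iff_of_nonneg fun i _ => Finset.sum_nonneg fun j _ => hterm i j] at hS
  have hij0 := (Finset.sum_eq_zero_iff_of_nonneg fun j _ => hterm i j).mp
    (hS i (Finset.mem_univ i)) j (Finset.mem_univ j)
  rwa [mul_eq_zero, or_iff_right (hf.sub_mul_sub_pos hij).ne', Complex.normSq_eq_zero] at hij0

variable [DecidableEq ι]

theorem trace_conjStarAlgAut [CommRing R] [StarRing R] (u : unitary (Matrix ι ι R))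
    (m : Matrix ι ι R) : (Unitary.conjStarAlgAut R _ u m).trace = m.trace := by
  rw [Unitary.conjStarAlgAut_apply, trace_mul_cycle, Unitary.coe_star_mul_self, Matrix.one_mul]

theorem commute_diagonal_of_apply_eq_zero [CommRing R] {d : ι → R} {m : Matrix ι ι R}
    (hm : ∀ i j, d i ≠ d j → m i j = 0) : Commute (diagonal d) m := by
  ext i j
  rw [diagonal_mul, mul_diagonal]
  by_cases hij : d i = d j
  · rw [hij, mul_comm]
  · simp [hm i j hij]

theorem trace_diagonal_mul_lie_lie_diagonal [CommRing R] (e d : ι → R) (m : Matrix ι ι R) :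
    (diagonal e * ⁅m, ⁅m, diagonal d⁆⁆).trace =
      ∑ i, ∑ j, (e i - e j) * (d i - d j) * (m i j * m j i) := by
  have hlie : ∀ (f : ι → R) i j, ⁅diagonal f, m⁆ i j = (f i - f j) * m i j := fun f i j => by
    rw [Ring.lie_def, sub_apply, diagonal_mul, mul_diagonal, sub_mul, mul_comm (m i j)]
  have hlie' : ∀ (f : ι → R) i j, ⁅m, diagonal f⁆ i j = (f j - f i) * m i j := fun f i j => by
    rw [Ring.lie_def, sub_apply, diagonal_mul, mul_diagonal, sub_mul, mul_comm (m i j)]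
  rw [trace_mul_lie]
  simp only [trace, diag, mul_apply, hlie, hlie']
  refine Finset.sum_congr rfl fun i _ => Finset.sum_congr rfl fun j _ => ?_
  ring

theorem exp_conjStarAlgAut (u : unitary (Matrix ι ι ℂ)) (m : Matrix ι ι ℂ) :
    NormedSpace.exp (Unitary.conjStarAlgAut ℂ _ u m) =
      Unitary.conjStarAlgAut ℂ _ u (NormedSpace.exp m) := by
  simpa using exp_units_conj (Unitary.toUnits u) m

theorem exp_diagonal_ofReal (d : ι → ℝ) :
    NormedSpace.exp (diagonal (Complex.ofReal ∘ d)) =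
      diagonal (Complex.ofReal ∘ Real.exp ∘ d) := by
  rw [exp_diagonal]
  congr 1
  ext i
  simp [Complex.ofReal_exp, Complex.exp_eq_exp_ℂ]

theorem trace_exp_mul_lie_lie_conjStarAlgAut (u : unitary (Matrix ι ι ℂ)) (b k : Matrix ι ι ℂ) :
    (NormedSpace.exp (Unitary.conjStarAlgAut ℂ _ u b) *
        ⁅Unitary.conjStarAlgAut ℂ _ u k, ⁅Unitary.conjStarAlgAut ℂ _ u k,
          Unitary.conjStarAlgAut ℂ _ u b⁆⁆).trace =
      (NormedSpace.exp b * ⁅k, ⁅k, b⁆⁆).trace := by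
  simp only [Ring.lie_def, ← map_mul, ← map_sub, exp_conjStarAlgAut, trace_conjStarAlgAut]

theorem trace_exp_diagonal_mul_lie_lie_diagonal (d : ι → ℝ) {m : Matrix ι ι ℂ}
    (hm : m.IsHermitian) :
    (NormedSpace.exp (diagonal (Complex.ofReal ∘ d)) *
        ⁅m, ⁅m, diagonal (Complex.ofReal ∘ d)⁆⁆).trace =
      ((∑ i, ∑ j, (Real.exp (d i) - Real.exp (d j)) * (d i - d j) * Complex.normSq (m i j) : ℝ)
        : ℂ) := by
  rw [exp_diagonal_ofReal, trace_diagonal_mul_lie_lie_diagonal]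
  simp only [Function.comp_apply, hm.apply_mul_apply_eq_normSq]
  push_cast
  rfl

theorem IsHermitian.trace_exp_mul_lie_lie_nonneg_and_eq_zero_iff {a h : Matrix ι ι ℂ}
    (ha : a.IsHermitian) (hh : h.IsHermitian) :
    0 ≤ (NormedSpace.exp a * ⁅h, ⁅h, a⁆⁆).trace ∧
      ((NormedSpace.exp a * ⁅h, ⁅h, a⁆⁆).trace = 0 ↔ Commute a h) := by
  set φ := Unitary.conjStarAlgAut ℂ (Matrix ι ι ℂ) ha.eigenvectorUnitary
  set d := ha.eigenvalues
  set k := φ.symm h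
  have hk : k.IsHermitian := IsSelfAdjoint.map hh _
  have hφD : φ (diagonal (Complex.ofReal ∘ d)) = a := ha.spectral_theorem.symm
  have hφk : φ k = h := φ.apply_symm_apply h
  have htrace : (NormedSpace.exp a * ⁅h, ⁅h, a⁆⁆).trace =
      ((∑ i, ∑ j, (Real.exp (d i) - Real.exp (d j)) * (d i - d j) * Complex.normSq (k i j) : ℝ)
        : ℂ) := by
    rw [← hφD, ← hφk, trace_exp_mul_lie_lie_conjStarAlgAut,
      trace_exp_diagonal_mul_lie_lie_diagonal d hk]
  refine ⟨htrace ▸ Complex.zero_le_real.mpr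
    (sum_sub_mul_sub_mul_normSq_nonneg Real.exp_monotone d k), ⟨fun h0 => ?_, fun hah => ?_⟩⟩
  · rw [htrace, Complex.ofReal_eq_zero] at h0
    have hDk : Commute (diagonal (Complex.ofReal ∘ d)) k := commute_diagonal_of_apply_eq_zero
      fun i j hij => apply_eq_zero_of_sum_sub_mul_sub_mul_normSq_eq_zero Real.exp_strictMono h0
        (fun hd => hij (by simp [hd]))
    rw [← hφD, ← hφk]
    exact hDk.map φ
  · simp [Ring.lie_def, hah.eq]

end Matrix

theorem lap_eq_lie_lie {n : ℕ} (x y a : Matrix (Fin n) (Fin n) ℂ) :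
    lap x y a = ⁅y, ⁅y, a⁆⁆ + ⁅x, ⁅x, a⁆⁆ := by
  simp only [lap, delta1, delta2, Ring.lie_def]
  noncomm_ring

/-- For every Hermitian `a`, `τ(exp(a)·Δa) ≥ 0` (real and nonnegative, phrased via the
order on `ℂ`), with equality if and only if `a` is a scalar multiple of the identity. -/
theorem trace_exp_laplacian_nonneg (n : ℕ) (x y : Matrix (Fin n) (Fin n) ℂ)
    (hx : x.IsHermitian) (hy : y.IsHermitian) (hgen : GenCond x y)
    (a : Matrix (Fin n) (Fin n) ℂ) (ha : a.IsHermitian) :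
    0 ≤ (NormedSpace.exp a * lap x y a).trace ∧
    ((NormedSpace.exp a * lap x y a).trace = 0 ↔
      ∃ z : ℂ, a = z • (1 : Matrix (Fin n) (Fin n) ℂ)) := by
  obtain ⟨hy_nonneg, hy_zero⟩ := ha.trace_exp_mul_lie_lie_nonneg_and_eq_zero_iff hy
  obtain ⟨hx_nonneg, hx_zero⟩ := ha.trace_exp_mul_lie_lie_nonneg_and_eq_zero_iff hx
  rw [lap_eq_lie_lie, Matrix.mul_add, trace_add]
  refine ⟨add_nonneg hy_nonneg hx_nonneg, fun h0 => ?_, ?_⟩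
  · obtain ⟨hy0, hx0⟩ := (add_eq_zero_iff_of_nonneg hy_nonneg hx_nonneg).mp h0
    exact hgen a ((hx_zero.mp hx0).smul_right _).exp_right.eq
      ((hy_zero.mp hy0).smul_right _).exp_right.eq
  · rintro ⟨z, rfl⟩
    rw [hy_zero.mpr ((Commute.one_left y).smul_left z),
      hx_zero.mpr ((Commute.one_left x).smul_left z), add_zero]
end

section
/- For every Hermitian a ∈ M_n(ℂ), the trace τ(a·Δ(a)) is real and satisfies τ(a·Δ(a)) ≥ 0, with equality if and only if a is a scalar multiple of the identity matrix. -/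
open Matrix
open scoped ComplexOrder

/-!
Since `δ₂∘δ₂ = ad_x∘ad_x`, cyclicity of the trace and the Hermiticity of `a`, `x`, `y` give
`τ(a·Δa) = τ(b₁ᴴ b₁) + τ(b₂ᴴ b₂)` with `b₁ = [y, a]`, `b₂ = [x, a]`, a sum of squared
Hilbert–Schmidt norms. It vanishes exactly when `a` commutes with `x` and `y`, hence with `u`
and `v`, and the generating condition makes `a` scalar.
-/
lemma Matrix.trace_mul_commutator {m R : Type*} [Fintype m] [CommRing R] (a h c : Matrix m m R) :
    (a * (h * c - c * h)).trace = ((a * h - h * a) * c).trace := by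
  rw [mul_sub, sub_mul, trace_sub, trace_sub, ← mul_assoc, ← mul_assoc, trace_mul_comm (a * c),
    ← mul_assoc]

section Laplacian

variable {n : ℕ} {x y a : Matrix (Fin n) (Fin n) ℂ}

lemma delta2_delta2 (x a : Matrix (Fin n) (Fin n) ℂ) :
    delta2 x (delta2 x a) = delta1 x (delta1 x a) := by
  simp only [delta1, delta2]
  noncomm_ring

lemma delta1_eq_zero_iff : delta1 y a = 0 ↔ Commute y a :=
  sub_eq_zero

lemma conjTranspose_delta1 (hy : y.IsHermitian) (ha : a.IsHermitian) :
    (delta1 y a)ᴴ = -delta1 y a := by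
  simp [delta1, conjTranspose_sub, conjTranspose_mul, hy.eq, ha.eq]

lemma trace_mul_delta1_delta1 (hy : y.IsHermitian) (ha : a.IsHermitian) :
    (a * delta1 y (delta1 y a)).trace = ((delta1 y a)ᴴ * delta1 y a).trace := by
  rw [delta1, trace_mul_commutator, conjTranspose_delta1 hy ha, ← neg_sub, delta1]

lemma trace_mul_lap (hx : x.IsHermitian) (hy : y.IsHermitian) (ha : a.IsHermitian) :
    (a * lap x y a).trace
      = ((delta1 y a)ᴴ * delta1 y a).trace + ((delta1 x a)ᴴ * delta1 x a).trace := by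
  rw [lap, delta2_delta2, mul_add, trace_add, trace_mul_delta1_delta1 hy ha,
    trace_mul_delta1_delta1 hx ha]

lemma GenCond.exists_eq_smul_one (hgen : GenCond x y) (hxa : Commute x a) (hya : Commute y a) :
    ∃ z : ℂ, a = z • (1 : Matrix (Fin n) (Fin n) ℂ) :=
  hgen a ((hxa.symm.smul_right _).exp_right) ((hya.symm.smul_right _).exp_right)

end Laplacian

/-- For every Hermitian `a`, `τ(a·Δa) ≥ 0` (real and nonnegative, phrased via the order
on `ℂ`), with equality if and only if `a` is a scalar multiple of the identity. -/
theorem trace_laplacian_nonneg (n : ℕ) (x y : Matrix (Fin n) (Fin n) ℂ)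
    (hx : x.IsHermitian) (hy : y.IsHermitian) (hgen : GenCond x y)
    (a : Matrix (Fin n) (Fin n) ℂ) (ha : a.IsHermitian) :
    0 ≤ (a * lap x y a).trace ∧
    ((a * lap x y a).trace = 0 ↔ ∃ z : ℂ, a = z • (1 : Matrix (Fin n) (Fin n) ℂ)) := by
  rw [trace_mul_lap hx hy ha]
  have hy_nonneg := (posSemidef_conjTranspose_mul_self (delta1 y a)).trace_nonneg
  have hx_nonneg := (posSemidef_conjTranspose_mul_self (delta1 x a)).trace_nonneg
  refine ⟨add_nonneg hy_nonneg hx_nonneg, ?_⟩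
  rw [add_eq_zero_iff_of_nonneg hy_nonneg hx_nonneg, trace_conjTranspose_mul_self_eq_zero_iff,
    trace_conjTranspose_mul_self_eq_zero_iff, delta1_eq_zero_iff, delta1_eq_zero_iff]
  constructor
  · rintro ⟨hya, hxa⟩
    exact hgen.exists_eq_smul_one hxa hya
  · rintro ⟨z, rfl⟩
    exact ⟨(Commute.one_right y).smul_right z, (Commute.one_right x).smul_right z⟩
end

section
/- Let c : [0, ∞) → M_n(ℂ) be a differentiable map with c(t) positive definite for all t ≥ 0, satisfying the noncommutative Ricci flow equation c′(t) = −Δ(log c(t)), with initial metric c₀ := c(0). Then t ↦ log c(t) is differentiable at 0, and the scalar curvature R₀ := −(d/dt) log c(t)|_{t=0} satisfies τ(c₀·R₀) = 0. -/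
open Matrix
open scoped ComplexOrder

/-! For a strictly positive element `a` of a C⋆-algebra the functional calculus gives
`log a = ∫₀^∞ ((1 + u)⁻¹ - (a + u)⁻¹) du`, so by the resolvent identity
`log b - log a = ∫₀^∞ (a + u)⁻¹ (b - a) (b + u)⁻¹ du`. Dividing by `t` and letting `b = c(t)`
tend to `a = c₀`, dominated convergence shows that `log c(t)` is differentiable with derivative
`D = ∫₀^∞ (c₀ + u)⁻¹ ċ (c₀ + u)⁻¹ du`. For a tracial functional `τ`, cyclicity gives
`τ(c₀ D) = τ((∫₀^∞ (c₀ + u)⁻¹ c₀ (c₀ + u)⁻¹ du) ċ) = τ(ċ)`, since the inner integral is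
`1` by `∫₀^∞ z (z + u)⁻² du = 1`. Along the Ricci flow `ċ = -Δ log c₀` is a sum of
commutators, hence traceless. -/

open MeasureTheory Set Filter Topology

section ScalarIntegrals

lemma hasDerivAt_neg_inv_add {p u : ℝ} (h : p + u ≠ 0) :
    HasDerivAt (fun v => -(p + v)⁻¹) ((p + u) ^ 2)⁻¹ u :=
  (((hasDerivAt_id u).const_add p).inv h).neg.congr_deriv (by simp [neg_div])

lemma tendsto_neg_inv_add_atTop (p : ℝ) : Tendsto (fun v : ℝ => -(p + v)⁻¹) atTop (𝓝 0) := by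
  simpa using (tendsto_atTop_add_const_left atTop p tendsto_id).inv_tendsto_atTop.neg

lemma integrableOn_Ioi_inv_add_sq {p : ℝ} (hp : 0 < p) :
    IntegrableOn (fun u : ℝ => ((p + u) ^ 2)⁻¹) (Ioi 0) :=
  integrableOn_Ioi_deriv_of_nonneg' (fun _ hu => hasDerivAt_neg_inv_add (by grind))
    (fun _ _ => by positivity) (tendsto_neg_inv_add_atTop p)

lemma integral_Ioi_inv_add_sq {p : ℝ} (hp : 0 < p) :
    ∫ u in Ioi 0, ((p + u) ^ 2)⁻¹ = p⁻¹ := by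
  rw [integral_Ioi_of_hasDerivAt_of_nonneg' (fun _ hu => hasDerivAt_neg_inv_add (by grind))
    (fun _ _ => by positivity) (tendsto_neg_inv_add_atTop p)]
  simp

lemma integral_Ioi_inv_add_mul_self_mul_inv_add {z : ℝ} (hz : 0 < z) :
    ∫ u in Ioi 0, (z + u)⁻¹ * z * (z + u)⁻¹ = 1 := by
  simp_rw [fun u : ℝ => show (z + u)⁻¹ * z * (z + u)⁻¹ = z * ((z + u) ^ 2)⁻¹ by
    rw [← inv_pow]; ring]
  rw [integral_const_mul, integral_Ioi_inv_add_sq hz, mul_inv_cancel₀ hz.ne']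

lemma abs_inv_add_sub_inv_add_le {p q m u : ℝ} (hm : 0 < m) (hp : m ≤ p) (hq : m ≤ q)
    (hu : 0 ≤ u) : |(p + u)⁻¹ - (q + u)⁻¹| ≤ |q - p| * ((m + u) ^ 2)⁻¹ := by
  have hpu : 0 < p + u := by linarith
  have hqu : 0 < q + u := by linarith
  rw [inv_sub_inv hpu.ne' hqu.ne', abs_div, abs_of_pos (mul_pos hpu hqu), div_eq_mul_inv,
    add_sub_add_right_eq_sub]
  gcongr
  nlinarith

lemma continuousOn_log_integrand :
    ContinuousOn (Function.uncurry fun u z : ℝ => (1 + u)⁻¹ - (z + u)⁻¹) (Ioi 0 ×ˢ Ioi 0) := by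
  refine ContinuousOn.sub ?_ ?_ <;> refine ContinuousOn.inv₀ (by fun_prop) ?_ <;>
    rintro ⟨u, z⟩ ⟨hu, hz⟩ <;> simp only [mem_Ioi] at hu hz <;> positivity

lemma integral_Ioi_inv_one_add_sub_inv_add {l : ℝ} (hl : 0 < l) :
    ∫ u in Ioi 0, ((1 + u)⁻¹ - (l + u)⁻¹) = Real.log l := by
  have hm : 0 < min 1 l := lt_min one_pos hl
  have hint : IntegrableOn (fun u : ℝ => (1 + u)⁻¹ - (l + u)⁻¹) (Ioi 0) := by
    refine ((integrableOn_Ioi_inv_add_sq hm).const_mul |l - 1|).mono' ?_ ?_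
    · exact (continuousOn_log_integrand.comp (f := fun u => (u, l)) (by fun_prop)
        fun u hu => ⟨hu, hl⟩).aestronglyMeasurable measurableSet_Ioi
    · filter_upwards [ae_restrict_mem measurableSet_Ioi] with u hu
      exact abs_inv_add_sub_inv_add_le hm (min_le_left _ _) (min_le_right _ _) (le_of_lt hu)
  have hderiv : ∀ u ∈ Ici (0 : ℝ), HasDerivAt (fun v => Real.log (1 + v) - Real.log (l + v))
      ((1 + u)⁻¹ - (l + u)⁻¹) u := fun u hu =>
    ((((hasDerivAt_id u).const_add 1).log (by grind)).sub
      (((hasDerivAt_id u).const_add l).log (by grind))).congr_deriv (by simp)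
  have hlim : Tendsto (fun v => Real.log (1 + v) - Real.log (l + v)) atTop (𝓝 0) := by
    have := (Real.tendsto_log_comp_add_sub_log 1).sub (Real.tendsto_log_comp_add_sub_log l)
    simp only [sub_self, sub_sub_sub_cancel_right] at this
    simpa only [add_comm] using this
  rw [integral_Ioi_of_hasDerivAt_of_tendsto' hderiv hint hlim]
  simp

end ScalarIntegrals

section CStarAlgebra

variable {A : Type*} [CStarAlgebra A] {a : A}

lemma abs_le_norm_of_mem_spectrum {z : ℝ} (hz : z ∈ spectrum ℝ a) : |z| ≤ ‖a‖ := by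
  obtain _ | _ := subsingleton_or_nontrivial A
  · simp [spectrum.of_subsingleton] at hz
  · exact spectrum.norm_le_norm_of_mem hz

lemma norm_log_integrand_le {m u z : ℝ} (hm : 0 < m) (hm1 : m ≤ 1) (hmz : m ≤ z) (hu : 0 ≤ u)
    (hz : z ∈ spectrum ℝ a) : ‖(1 + u)⁻¹ - (z + u)⁻¹‖ ≤ (‖a‖ + 1) * ((m + u) ^ 2)⁻¹ := by
  refine (abs_inv_add_sub_inv_add_le hm hm1 hmz hu).trans ?_
  gcongr
  exact (abs_sub _ _).trans (by simpa using abs_le_norm_of_mem_spectrum hz)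

variable [PartialOrder A] [StarOrderedRing A]

namespace IsStrictlyPositive

lemma exists_pos_le_of_mem_spectrum (ha : IsStrictlyPositive a) :
    ∃ ε > 0, ∀ z ∈ spectrum ℝ a, ε ≤ z := by
  rcases (spectrum ℝ a).eq_empty_or_nonempty with h | h
  · exact ⟨1, one_pos, by simp [h]⟩
  · obtain ⟨ε, hε, hmin⟩ := (spectrum.isCompact a).exists_isMinOn h continuousOn_id
    exact ⟨ε, ha.spectrum_pos hε, hmin⟩

lemma isUnit_add_algebraMap (ha : IsStrictlyPositive a) {u : ℝ} (hu : 0 ≤ u) :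
    IsUnit (a + algebraMap ℝ A u) :=
  (ha.add_nonneg (algebraMap_nonneg A hu)).isUnit

lemma continuousOn_inv_add (ha : IsStrictlyPositive a) {u : ℝ} (hu : 0 ≤ u) :
    ContinuousOn (fun z : ℝ => (z + u)⁻¹) (spectrum ℝ a) :=
  ContinuousOn.inv₀ (by fun_prop) fun z hz => (add_pos_of_pos_of_nonneg (ha.spectrum_pos hz) hu).ne'

lemma cfc_inv_add (ha : IsStrictlyPositive a) {u : ℝ} (hu : 0 ≤ u) :
    cfc (fun z => (z + u)⁻¹) a = Ring.inverse (a + algebraMap ℝ A u) := by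
  rw [cfc_inv (fun z => z + u) a
      (fun z hz => (add_pos_of_pos_of_nonneg (ha.spectrum_pos hz) hu).ne'),
    cfc_add_const u (fun z => z) a, cfc_id' ℝ a]

lemma cfc_log_integrand (ha : IsStrictlyPositive a) {u : ℝ} (hu : 0 ≤ u) :
    cfc (fun z => (1 + u)⁻¹ - (z + u)⁻¹) a =
      algebraMap ℝ A (1 + u)⁻¹ - Ring.inverse (a + algebraMap ℝ A u) := by
  rw [cfc_sub _ _ a continuousOn_const (ha.continuousOn_inv_add hu), cfc_const (1 + u)⁻¹ a,
    ha.cfc_inv_add hu]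

lemma cfc_inv_add_mul_self_mul_inv_add (ha : IsStrictlyPositive a) {u : ℝ} (hu : 0 ≤ u) :
    cfc (fun z => (z + u)⁻¹ * z * (z + u)⁻¹) a =
      Ring.inverse (a + algebraMap ℝ A u) * a * Ring.inverse (a + algebraMap ℝ A u) := by
  have hinv := ha.continuousOn_inv_add hu
  rw [cfc_mul (fun z => (z + u)⁻¹ * z) _ a (hinv.mul continuousOn_id) hinv,
    cfc_mul _ (fun z => z) a hinv continuousOn_id, cfc_id' ℝ a, ha.cfc_inv_add hu]

lemma norm_inverse_add_algebraMap_le (ha : IsStrictlyPositive a) {ε u : ℝ}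
    (hε : ∀ z ∈ spectrum ℝ a, ε ≤ z) (hε0 : 0 < ε) (hu : 0 ≤ u) :
    ‖Ring.inverse (a + algebraMap ℝ A u)‖ ≤ (ε + u)⁻¹ := by
  rw [← ha.cfc_inv_add hu]
  refine norm_cfc_le (by positivity) fun z hz => ?_
  have hεz := hε z hz
  rw [Real.norm_of_nonneg (inv_nonneg.2 (by linarith))]
  gcongr

lemma norm_inverse_add_algebraMap_le_of_norm_sub_le {x : A}
    (ha : IsStrictlyPositive a) (hx : IsStrictlyPositive x) {ε u : ℝ}
    (hε : ∀ z ∈ spectrum ℝ a, ε ≤ z) (hε0 : 0 < ε) (hu : 0 ≤ u) (hxa : ‖x - a‖ ≤ ε / 2) :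
    ‖Ring.inverse (x + algebraMap ℝ A u)‖ ≤ 2 * (ε + u)⁻¹ := by
  set Rx := Ring.inverse (x + algebraMap ℝ A u)
  set Ra := Ring.inverse (a + algebraMap ℝ A u)
  have hRa : ‖Ra‖ ≤ (ε + u)⁻¹ := ha.norm_inverse_add_algebraMap_le hε hε0 hu
  have hsmall : ‖a - x‖ * ‖Ra‖ ≤ 1 / 2 := calc
    _ ≤ ε / 2 * ε⁻¹ := by
      rw [norm_sub_rev]
      gcongr
      exact hRa.trans (inv_anti₀ hε0 (by linarith))
    _ = 1 / 2 := by field_simp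
  have hdiff : Rx - Ra = Rx * (a - x) * Ra := by
    rw [Ring.inverse_sub_inverse (iff_of_true (hx.isUnit_add_algebraMap hu)
      (ha.isUnit_add_algebraMap hu)), add_sub_add_right_eq_sub]
  have : ‖Rx‖ ≤ ‖Ra‖ + ‖Rx‖ * (1 / 2) := calc
    ‖Rx‖ = ‖Ra + Rx * (a - x) * Ra‖ := by rw [← hdiff, add_sub_cancel]
    _ ≤ ‖Ra‖ + ‖Rx‖ * (‖a - x‖ * ‖Ra‖) := by grw [norm_add_le, norm_mul₃_le, mul_assoc]
    _ ≤ ‖Ra‖ + ‖Rx‖ * (1 / 2) := by gcongr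
  linarith

lemma continuousOn_inverse_add_algebraMap (ha : IsStrictlyPositive a) :
    ContinuousOn (fun u : ℝ => Ring.inverse (a + algebraMap ℝ A u)) (Ici 0) := fun u hu =>
  ((NormedRing.inverse_continuousAt (ha.isUnit_add_algebraMap hu).unit).comp_of_eq
    (by fun_prop : Continuous fun u : ℝ => a + algebraMap ℝ A u).continuousAt
    rfl).continuousWithinAt

lemma integrableOn_inverse_mul_mul_inverse {b : A} (ha : IsStrictlyPositive a)
    (hb : IsStrictlyPositive b) (c : A) :
    IntegrableOn (fun u : ℝ => Ring.inverse (a + algebraMap ℝ A u) * c *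
      Ring.inverse (b + algebraMap ℝ A u)) (Ioi 0) := by
  obtain ⟨ε, hε0, hε⟩ := ha.exists_pos_le_of_mem_spectrum
  obtain ⟨δ, hδ0, hδ⟩ := hb.exists_pos_le_of_mem_spectrum
  have hm : 0 < min ε δ := lt_min hε0 hδ0
  refine ((integrableOn_Ioi_inv_add_sq hm).const_mul ‖c‖).mono' ?_ ?_
  · exact ((ha.continuousOn_inverse_add_algebraMap.mul continuousOn_const).mul
      hb.continuousOn_inverse_add_algebraMap).mono Ioi_subset_Ici_self
      |>.aestronglyMeasurable measurableSet_Ioi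
  · refine ae_restrict_of_forall_mem measurableSet_Ioi fun u (hu : 0 < u) => ?_
    have ha' := ha.norm_inverse_add_algebraMap_le
      (fun z hz => (min_le_left ε δ).trans (hε z hz)) hm hu.le
    have hb' := hb.norm_inverse_add_algebraMap_le
      (fun z hz => (min_le_right ε δ).trans (hδ z hz)) hm hu.le
    calc _ ≤ ‖Ring.inverse (a + algebraMap ℝ A u)‖ * ‖c‖ * ‖Ring.inverse (b + algebraMap ℝ A u)‖ :=
          norm_mul₃_le
      _ ≤ (min ε δ + u)⁻¹ * ‖c‖ * (min ε δ + u)⁻¹ := by gcongr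
      _ = ‖c‖ * ((min ε δ + u) ^ 2)⁻¹ := by rw [← inv_pow]; ring

lemma integrableOn_log_integrand (ha : IsStrictlyPositive a) :
    IntegrableOn (fun u : ℝ => algebraMap ℝ A (1 + u)⁻¹ - Ring.inverse (a + algebraMap ℝ A u))
      (Ioi 0) := by
  obtain ⟨ε, hε0, hε⟩ := ha.exists_pos_le_of_mem_spectrum
  refine (integrableOn_cfc measurableSet_Ioi _ _ a
    (continuousOn_log_integrand.mono (prod_mono_right fun z hz => ha.spectrum_pos hz))
    (ae_restrict_of_forall_mem measurableSet_Ioi fun u hu z hz =>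
      norm_log_integrand_le (lt_min one_pos hε0) (min_le_left _ _)
        ((min_le_right _ _).trans (hε z hz)) (le_of_lt hu) hz)
    ((integrableOn_Ioi_inv_add_sq (lt_min one_pos hε0)).const_mul _).2).congr_fun
    (fun u hu => ha.cfc_log_integrand (le_of_lt hu)) measurableSet_Ioi

lemma log_eq_integral (ha : IsStrictlyPositive a) :
    CFC.log a =
      ∫ u in Ioi 0, (algebraMap ℝ A (1 + u)⁻¹ - Ring.inverse (a + algebraMap ℝ A u)) := by
  obtain ⟨ε, hε0, hε⟩ := ha.exists_pos_le_of_mem_spectrum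
  rw [CFC.log,
    cfc_congr fun z hz => (integral_Ioi_inv_one_add_sub_inv_add (ha.spectrum_pos hz)).symm,
    cfc_setIntegral measurableSet_Ioi _ _ a
      (continuousOn_log_integrand.mono (prod_mono_right fun z hz => ha.spectrum_pos hz))
      (ae_restrict_of_forall_mem measurableSet_Ioi fun u hu z hz =>
        norm_log_integrand_le (lt_min one_pos hε0) (min_le_left _ _)
          ((min_le_right _ _).trans (hε z hz)) (le_of_lt hu) hz)
      ((integrableOn_Ioi_inv_add_sq (lt_min one_pos hε0)).const_mul _).2]
  exact setIntegral_congr_fun measurableSet_Ioi fun u hu => ha.cfc_log_integrand (le_of_lt hu)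

lemma log_sub_log {b : A} (ha : IsStrictlyPositive a) (hb : IsStrictlyPositive b) :
    CFC.log b - CFC.log a = ∫ u in Ioi 0,
      Ring.inverse (a + algebraMap ℝ A u) * (b - a) * Ring.inverse (b + algebraMap ℝ A u) := by
  rw [hb.log_eq_integral, ha.log_eq_integral,
    ← integral_sub hb.integrableOn_log_integrand ha.integrableOn_log_integrand]
  refine setIntegral_congr_fun measurableSet_Ioi fun u (hu : 0 < u) => ?_
  rw [sub_sub_sub_cancel_left, Ring.inverse_sub_inverse (iff_of_true
    (ha.isUnit_add_algebraMap hu.le) (hb.isUnit_add_algebraMap hu.le)), add_sub_add_right_eq_sub]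

lemma integral_inverse_mul_self_mul_inverse (ha : IsStrictlyPositive a) :
    ∫ u in Ioi 0, Ring.inverse (a + algebraMap ℝ A u) * a * Ring.inverse (a + algebraMap ℝ A u)
      = 1 := by
  obtain ⟨ε, hε0, hε⟩ := ha.exists_pos_le_of_mem_spectrum
  have hne : ∀ p ∈ Ioi (0 : ℝ) ×ˢ spectrum ℝ a, p.2 + p.1 ≠ 0 := fun p hp =>
    (add_pos (ha.spectrum_pos hp.2) hp.1).ne'
  have hcont : ContinuousOn (Function.uncurry fun u z : ℝ => (z + u)⁻¹ * z * (z + u)⁻¹)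
      (Ioi 0 ×ˢ spectrum ℝ a) :=
    ((ContinuousOn.inv₀ (by fun_prop) hne).mul (by fun_prop)).mul
      (ContinuousOn.inv₀ (by fun_prop) hne)
  have hbound : ∀ u ∈ Ioi (0 : ℝ), ∀ z ∈ spectrum ℝ a,
      ‖(z + u)⁻¹ * z * (z + u)⁻¹‖ ≤ ‖a‖ * ((ε + u) ^ 2)⁻¹ := fun u (hu : 0 < u) z hz => by
    have hz0 := ha.spectrum_pos hz
    have hza := (le_abs_self z).trans (abs_le_norm_of_mem_spectrum hz)
    have hεz := hε z hz
    rw [show (z + u)⁻¹ * z * (z + u)⁻¹ = z * ((z + u) ^ 2)⁻¹ by rw [← inv_pow]; ring,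
      Real.norm_of_nonneg (by positivity)]
    gcongr
  calc _ = ∫ u in Ioi 0, cfc (fun z : ℝ => (z + u)⁻¹ * z * (z + u)⁻¹) a :=
        setIntegral_congr_fun measurableSet_Ioi fun u (hu : 0 < u) =>
          (ha.cfc_inv_add_mul_self_mul_inv_add hu.le).symm
    _ = cfc (fun z : ℝ => ∫ u in Ioi 0, (z + u)⁻¹ * z * (z + u)⁻¹) a :=
        (cfc_setIntegral measurableSet_Ioi _ _ a hcont
          (ae_restrict_of_forall_mem measurableSet_Ioi hbound)
          ((integrableOn_Ioi_inv_add_sq hε0).const_mul _).2).symm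
    _ = cfc (fun _ : ℝ => (1 : ℝ)) a :=
        cfc_congr fun z hz => integral_Ioi_inv_add_mul_self_mul_inv_add (ha.spectrum_pos hz)
    _ = 1 := by rw [cfc_const (1 : ℝ) a, map_one]

theorem map_mul_integral_inverse_mul_mul_inverse (φ : A →L[ℂ] ℂ)
    (hφ : ∀ x y, φ (x * y) = φ (y * x)) (ha : IsStrictlyPositive a) (b : A) :
    φ (a * ∫ u in Ioi 0, Ring.inverse (a + algebraMap ℝ A u) * b *
      Ring.inverse (a + algebraMap ℝ A u)) = φ b := by
  set R : ℝ → A := fun u => Ring.inverse (a + algebraMap ℝ A u)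
  calc φ (a * ∫ u in Ioi 0, R u * b * R u)
      = ∫ u in Ioi 0, φ (a * (R u * b * R u)) :=
        ((φ.comp (ContinuousLinearMap.mul ℂ A a)).integral_comp_comm
          (ha.integrableOn_inverse_mul_mul_inverse ha b)).symm
    _ = ∫ u in Ioi 0, φ ((R u * a * R u) * b) := by
        congr 1 with u
        rw [← mul_assoc, ← mul_assoc, hφ, ← mul_assoc, ← mul_assoc]
    _ = φ ((∫ u in Ioi 0, R u * a * R u) * b) :=
        (φ.comp ((ContinuousLinearMap.mul ℂ A).flip b)).integral_comp_comm
          (ha.integrableOn_inverse_mul_mul_inverse ha a)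
    _ = φ b := by rw [ha.integral_inverse_mul_self_mul_inverse, one_mul]

end IsStrictlyPositive

theorem CFC.hasDerivWithinAt_log {a : ℝ → A} {b : A} {s : Set ℝ} {t₀ : ℝ}
    (hab : HasDerivWithinAt a b s t₀) (hs : ∀ t ∈ s, IsStrictlyPositive (a t))
    (ht₀ : IsStrictlyPositive (a t₀)) :
    HasDerivWithinAt (fun t => CFC.log (a t)) (∫ u in Ioi 0,
      Ring.inverse (a t₀ + algebraMap ℝ A u) * b * Ring.inverse (a t₀ + algebraMap ℝ A u))
      s t₀ := by
  obtain ⟨ε, hε0, hε⟩ := ht₀.exists_pos_le_of_mem_spectrum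
  set R : ℝ → ℝ → A := fun t u => Ring.inverse (a t + algebraMap ℝ A u)
  have hcont : Tendsto a (𝓝[s \ {t₀}] t₀) (𝓝 (a t₀)) := hab.continuousWithinAt.mono sdiff_subset
  rw [hasDerivWithinAt_iff_tendsto_slope] at hab ⊢
  have hmem : ∀ᶠ t in 𝓝[s \ {t₀}] t₀, t ∈ s \ {t₀} := self_mem_nhdsWithin
  have hnear : ∀ᶠ t in 𝓝[s \ {t₀}] t₀, ‖a t - a t₀‖ ≤ ε / 2 :=
    (tendsto_iff_norm_sub_tendsto_zero.1 hcont).eventually (ge_mem_nhds (by positivity))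
  have hbdd : ∀ᶠ t in 𝓝[s \ {t₀}] t₀, ‖slope a t₀ t‖ ≤ ‖b‖ + 1 :=
    hab.norm.eventually (ge_mem_nhds (lt_add_one _))
  have hslope : ∀ t ∈ s \ {t₀}, ∫ u in Ioi 0, R t₀ u * slope a t₀ t * R t u =
      slope (fun t => CFC.log (a t)) t₀ t := fun t ht => by
    rw [slope_def_module _ t₀ t, slope_def_module _ t₀ t, ht₀.log_sub_log (hs t ht.1),
      ← integral_smul]
    simp only [R, mul_smul_comm, smul_mul_assoc]
  refine (tendsto_integral_filter_of_dominated_convergence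
    (fun u => 2 * (‖b‖ + 1) * ((ε + u) ^ 2)⁻¹) ?_ ?_ ?_ ?_).congr' (hmem.mono hslope)
  · filter_upwards [hmem] with t ht
    exact (ht₀.integrableOn_inverse_mul_mul_inverse (hs t ht.1) _).aestronglyMeasurable
  · filter_upwards [hmem, hnear, hbdd] with t ht htnear htbdd
    refine ae_restrict_of_forall_mem measurableSet_Ioi fun u (hu : 0 < u) => ?_
    have h₀ := ht₀.norm_inverse_add_algebraMap_le hε hε0 hu.le
    have ht := ht₀.norm_inverse_add_algebraMap_le_of_norm_sub_le (hs t ht.1) hε hε0 hu.le htnear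
    calc _ ≤ ‖R t₀ u‖ * ‖slope a t₀ t‖ * ‖R t u‖ := norm_mul₃_le
      _ ≤ (ε + u)⁻¹ * (‖b‖ + 1) * (2 * (ε + u)⁻¹) := by gcongr
      _ = 2 * (‖b‖ + 1) * ((ε + u) ^ 2)⁻¹ := by rw [← inv_pow]; ring
  · exact (integrableOn_Ioi_inv_add_sq hε0).const_mul _
  · refine ae_restrict_of_forall_mem measurableSet_Ioi fun u (hu : 0 < u) => ?_
    have hR : Tendsto (fun t => R t u) (𝓝[s \ {t₀}] t₀) (𝓝 (R t₀ u)) :=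
      (NormedRing.inverse_continuousAt (ht₀.isUnit_add_algebraMap hu.le).unit).tendsto.comp
        (hcont.add_const _)
    exact (tendsto_const_nhds.mul hab).mul hR

end CStarAlgebra

section Matrix

-- The L² operator norm induces the entrywise topology, so limits may be taken entrywise.
open scoped Matrix.Norms.L2Operator MatrixOrder

variable {n : ℕ}

lemma Matrix.IsHermitian.matLog_eq_log {a : Matrix (Fin n) (Fin n) ℂ} (ha : a.IsHermitian) :
    matLog a = CFC.log a := by
  rw [matLog, dif_pos ha, CFC.log, ha.cfc_eq, IsHermitian.cfc]
  rfl

lemma Matrix.hasDerivWithinAt_iff {f : ℝ → Matrix (Fin n) (Fin n) ℂ}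
    {D : Matrix (Fin n) (Fin n) ℂ} {s : Set ℝ} {t : ℝ} :
    HasDerivWithinAt f D s t ↔ ∀ i j, HasDerivWithinAt (fun x => f x i j) (D i j) s t := by
  simp only [hasDerivWithinAt_iff_tendsto_slope]
  exact tendsto_pi_nhds.trans (forall_congr' fun i => tendsto_pi_nhds)

theorem Matrix.PosDef.exists_hasDerivWithinAt_matLog_and_trace_eq
    {c : ℝ → Matrix (Fin n) (Fin n) ℂ} {B : Matrix (Fin n) (Fin n) ℂ} {s : Set ℝ} {t₀ : ℝ}
    (hc : ∀ i j, HasDerivWithinAt (fun t => c t i j) (B i j) s t₀)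
    (hs : ∀ t ∈ s, (c t).PosDef) (ht₀ : (c t₀).PosDef) :
    ∃ D : Matrix (Fin n) (Fin n) ℂ,
      (∀ i j, HasDerivWithinAt (fun t => matLog (c t) i j) (D i j) s t₀) ∧
      (c t₀ * D).trace = B.trace := by
  refine ⟨_, Matrix.hasDerivWithinAt_iff.1 ((CFC.hasDerivWithinAt_log
    (Matrix.hasDerivWithinAt_iff.2 hc) (fun t ht => (hs t ht).isStrictlyPositive)
    ht₀.isStrictlyPositive).congr (fun t ht => (hs t ht).isHermitian.matLog_eq_log)
    ht₀.isHermitian.matLog_eq_log), ?_⟩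
  exact ht₀.isStrictlyPositive.map_mul_integral_inverse_mul_mul_inverse
    (Matrix.traceLinearMap (Fin n) ℂ ℂ).toContinuousLinearMap Matrix.trace_mul_comm B

end Matrix

lemma trace_lap {n : ℕ} (x y a : Matrix (Fin n) (Fin n) ℂ) : (lap x y a).trace = 0 := by
  simp only [lap, delta1, delta2, trace_add, trace_sub, trace_mul_comm y, trace_mul_comm x]
  ring

theorem scalar_curvature_average_zero_general (n : ℕ) (x y : Matrix (Fin n) (Fin n) ℂ)
    (c : ℝ → Matrix (Fin n) (Fin n) ℂ)
    (hpos : ∀ t ∈ Set.Ici (0 : ℝ), (c t).PosDef)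
    (hflow : ∀ t ∈ Set.Ici (0 : ℝ), ∀ i j, HasDerivWithinAt (fun s => c s i j)
      ((-(lap x y (matLog (c t)))) i j) (Set.Ici (0 : ℝ)) t) :
    ∃ R₀ : Matrix (Fin n) (Fin n) ℂ,
      (∀ i j, HasDerivWithinAt (fun s => matLog (c s) i j) ((-R₀) i j)
        (Set.Ici (0 : ℝ)) 0) ∧
      (c 0 * R₀).trace = 0 := by
  obtain ⟨D, hD, htrace⟩ := Matrix.PosDef.exists_hasDerivWithinAt_matLog_and_trace_eq
    (hflow 0 self_mem_Ici) hpos (hpos 0 self_mem_Ici)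
  refine ⟨-D, by simpa only [neg_neg] using hD, ?_⟩
  rw [Matrix.mul_neg, trace_neg, htrace, trace_neg, trace_lap, neg_zero, neg_zero]

/-- Along the noncommutative Ricci flow starting at `c₀ = c(0)`, `t ↦ log c(t)` is
differentiable at `0`, and the scalar curvature `R₀ = −(d/dt) log c(t)|_{t=0}` satisfies
`τ(c₀·R₀) = 0`. -/
theorem scalar_curvature_average_zero (n : ℕ) (x y : Matrix (Fin n) (Fin n) ℂ)
    (hx : x.IsHermitian) (hy : y.IsHermitian)
    (c : ℝ → Matrix (Fin n) (Fin n) ℂ)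
    (hpos : ∀ t ∈ Set.Ici (0 : ℝ), (c t).PosDef)
    (hflow : ∀ t ∈ Set.Ici (0 : ℝ), ∀ i j, HasDerivWithinAt (fun s => c s i j)
      ((-(lap x y (matLog (c t)))) i j) (Set.Ici (0 : ℝ)) t) :
    ∃ R₀ : Matrix (Fin n) (Fin n) ℂ,
      (∀ i j, HasDerivWithinAt (fun s => matLog (c s) i j) ((-R₀) i j)
        (Set.Ici (0 : ℝ)) 0) ∧
      (c 0 * R₀).trace = 0 :=
  scalar_curvature_average_zero_general n x y c hpos hflow
end
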